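/- arXiv:0904.4167 — 3 statements merged into one kernel-verified Lean document; each statement's English description precedes it below -/
import Mathlib

section
/- In an algebraic model of type-(p,q) Ann-functors: fix a ring homomorphism p : R → R' and q : M → M' as above, and suppose h'* - h∗ = δk for a fixed 2-cochain k = (μ₀, ν₀). Then the assignment sending an Ann-functor structure g = (μ, ν) (i.e. a 2-cochain with δg = h'* - h∗) to the class of k - g induces a bijection between congruence classes of Ann-functor structures of type (p,q) — where two structures g, g' are congruent iff g' = g - δu for some function u : R → M' — and the Mac Lane cohomology group H²_MaL(R, M'). -/
open MulOpposite

/-- Mac Lane 2-cochains. -/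
abbrev MLCochain2 (R M : Type*) := (R → R → M) × (R → R → M)

/-- Mac Lane 3-cochains. -/
abbrev MLCochain3 (R M : Type*) :=
  (R → R → R → R → M) × (R → R → R → M) × (R → R → R → M) × (R → R → R → M)

/-- Mac Lane coboundary of a 2-cochain, with `M'` an `R`-bimodule via
the ring homomorphism `p : R → R'` (formulas M11–M14). -/
def MLd2 {R R' M' : Type*} [Ring R] [Ring R'] [AddCommGroup M'] [Module R' M']
    [Module R'ᵐᵒᵖ M'] (p : R →+* R') (g : MLCochain2 R M') : MLCochain3 R M' :=
  (fun x y z t => -g.1 x y - g.1 z t + g.1 (x+z) (y+t) + g.1 x z + g.1 y t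
      - g.1 (x+y) (z+t),
   fun x y z => p x • g.2 y z - g.2 (x*y) z + g.2 x (y*z) - op (p z) • g.2 x y,
   fun x y z => g.2 x y + g.2 x z - g.2 x (y+z) + p x • g.1 y z - g.1 (x*y) (x*z),
   fun x y z => -g.2 x z - g.2 y z + g.2 (x+y) z + g.1 (x*z) (y*z)
      - op (p z) • g.1 x y)

/-- Mac Lane coboundary of a 1-cochain `u : R → M'`. -/
def MLd1 {R R' M' : Type*} [Ring R] [Ring R'] [AddCommGroup M'] [Module R' M']
    [Module R'ᵐᵒᵖ M'] (p : R →+* R') (u : R → M') : MLCochain2 R M' :=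
  (fun x y => u x + u y - u (x+y),
   fun x y => op (p y) • u x + p x • u y - u (x*y))

lemma MLd2_sub {R R' M' : Type*} [Ring R] [Ring R'] [AddCommGroup M'] [Module R' M']
    [Module R'ᵐᵒᵖ M'] (p : R →+* R') (a b : MLCochain2 R M') :
    MLd2 p (a - b) = MLd2 p a - MLd2 p b := by
  simp only [MLd2, Prod.mk_sub_mk, Prod.fst_sub, Prod.snd_sub, Pi.sub_apply]
  refine Prod.ext ?_ (Prod.ext ?_ (Prod.ext ?_ ?_)) <;> funext <;>
    simp only [Pi.sub_apply, smul_sub] <;> abel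

lemma MLd1_neg {R R' M' : Type*} [Ring R] [Ring R'] [AddCommGroup M'] [Module R' M']
    [Module R'ᵐᵒᵖ M'] (p : R →+* R') (u : R → M') :
    MLd1 p (-u) = -(MLd1 p u) := by
  simp only [MLd1]
  refine Prod.ext ?_ ?_ <;> funext x y <;> simp <;> abel

/-- if `h'* - h∗ = δk` for a fixed 2-cochain `k`, then
`g ↦ k - g` induces a bijection between congruence classes of Ann-functor
structures of type `(p,q)` (2-cochains `g` with `δg = h'* - h∗`, modulo
`g' = g - δu`) and the Mac Lane cohomology group `H²_MaL(R, M')`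
(2-cocycles modulo 1-coboundaries). -/
theorem annFunctor_structures_classified_by_H2
    {R R' M' : Type*} [Ring R] [Ring R'] [AddCommGroup M'] [Module R' M']
    [Module R'ᵐᵒᵖ M'] (p : R →+* R')
    (c : MLCochain3 R M') (k : MLCochain2 R M') (hk : MLd2 p k = c) :
    ∃ Φ : Quot (fun (g g' : {g : MLCochain2 R M' // MLd2 p g = c}) =>
            ∃ u : R → M', g'.1 = g.1 - MLd1 p u) →
          Quot (fun (w w' : {w : MLCochain2 R M' // MLd2 p w = 0}) =>
            ∃ u : R → M', w'.1 = w.1 - MLd1 p u),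
      Function.Bijective Φ ∧
      ∀ (g : {g : MLCochain2 R M' // MLd2 p g = c})
        (w : {w : MLCochain2 R M' // MLd2 p w = 0}),
        w.1 = k - g.1 → Φ (Quot.mk _ g) = Quot.mk _ w := by
  
  classical
  let F : {g : MLCochain2 R M' // MLd2 p g = c} → {w : MLCochain2 R M' // MLd2 p w = 0} :=
    fun g => ⟨k - g.1, by rw [MLd2_sub, hk, g.2, sub_self]⟩
  let G : {w : MLCochain2 R M' // MLd2 p w = 0} → {g : MLCochain2 R M' // MLd2 p g = c} :=
    fun w => ⟨k - w.1, by rw [MLd2_sub, hk, w.2, sub_zero]⟩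
  have hF : ∀ g g' : {g : MLCochain2 R M' // MLd2 p g = c},
      (∃ u : R → M', g'.1 = g.1 - MLd1 p u) →
      (Quot.mk (fun w w' : {w : MLCochain2 R M' // MLd2 p w = 0} =>
        ∃ u : R → M', w'.1 = w.1 - MLd1 p u) (F g)) = Quot.mk _ (F g') := by
    rintro g g' ⟨u, hu⟩
    refine Quot.sound ⟨-u, ?_⟩
    show k - g'.1 = (k - g.1) - MLd1 p (-u)
    rw [hu, MLd1_neg]; abel
  have hG : ∀ w w' : {w : MLCochain2 R M' // MLd2 p w = 0},
      (∃ u : R → M', w'.1 = w.1 - MLd1 p u) →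
      (Quot.mk (fun g g' : {g : MLCochain2 R M' // MLd2 p g = c} =>
        ∃ u : R → M', g'.1 = g.1 - MLd1 p u) (G w)) = Quot.mk _ (G w') := by
    rintro w w' ⟨u, hu⟩
    refine Quot.sound ⟨-u, ?_⟩
    show k - w'.1 = (k - w.1) - MLd1 p (-u)
    rw [hu, MLd1_neg]; abel
  refine ⟨Quot.lift (fun g => Quot.mk _ (F g)) hF, ?_, ?_⟩
  · rw [Function.bijective_iff_has_inverse]
    refine ⟨Quot.lift (fun w => Quot.mk _ (G w)) hG, ?_, ?_⟩
    · refine Quot.ind fun g => ?_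
      have : G (F g) = g := Subtype.ext (by show k - (k - g.1) = g.1; abel)
      simp only [Quot.lift_mk, this]
    · refine Quot.ind fun w => ?_
      have : F (G w) = w := Subtype.ext (by show k - (k - w.1) = w.1; abel)
      simp only [Quot.lift_mk, this]
  · intro g w hw
    have : F g = w := Subtype.ext hw.symm
    simp only [Quot.lift_mk, this]
end

section
/- Strong Ann-functor classification (Hochschild H²): fix a ring homomorphism p : R → R' and suppose there exists a bi-additive normalized ν₀ : R² → M' with δ_Hoch(ν₀) = p*α'. Then the map sending a strong Ann-functor structure ν (a bi-additive normalized function with δ_Hoch(ν) = p*α') to the class of ν₀ - ν is a bijection between congruence classes of strong Ann-functor structures (ν ~ ν' iff ν' = ν - δ_Hoch(u) for some additive u : R → M', where δ_Hoch(u)(x,y) = x·u(y) - u(xy) + u(x)·y) and the Hochschild cohomology group H²_Hoch(R, M'). -/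
open MulOpposite

/-- Hochschild coboundary of a 2-cochain ν : R² → M', with M' an R-bimodule via
the ring homomorphism p. -/
def dHoch2 {R R' M' : Type*} [Ring R] [Ring R'] [AddCommGroup M'] [Module R' M']
    [Module R'ᵐᵒᵖ M'] (p : R →+* R') (ν : R → R → M') : R → R → R → M' :=
  fun x y z => p x • ν y z - ν (x * y) z + ν x (y * z) - op (p z) • ν x y

/-- Hochschild coboundary of a 1-cochain u : R → M'. -/
def dHoch1 {R R' M' : Type*} [Ring R] [Ring R'] [AddCommGroup M'] [Module R' M']
    [Module R'ᵐᵒᵖ M'] (p : R →+* R') (u : R → M') : R → R → M' :=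
  fun x y => p x • u y - u (x * y) + op (p y) • u x

/-- ν is additive in each variable. -/
def BiAdd {R M' : Type*} [Add R] [Add M'] (ν : R → R → M') : Prop :=
  (∀ x x' y, ν (x + x') y = ν x y + ν x' y) ∧
  (∀ x y y', ν x (y + y') = ν x y + ν x y')

section Aux
variable {R R' M' : Type*} [Ring R] [Ring R'] [AddCommGroup M'] [Module R' M']
  [Module R'ᵐᵒᵖ M'] (p : R →+* R')

lemma aux_dHoch2_sub (a b : R → R → M') :
    dHoch2 p (a - b) = dHoch2 p a - dHoch2 p b := by
  funext x y z
  simp only [dHoch2, Pi.sub_apply, smul_sub]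
  abel

lemma aux_biadd_sub {a b : R → R → M'} (ha : BiAdd a) (hb : BiAdd b) :
    BiAdd (a - b) := by
  constructor
  · intro x x' y; simp only [Pi.sub_apply, ha.1, hb.1]; abel
  · intro x y y'; simp only [Pi.sub_apply, ha.2, hb.2]; abel

lemma aux_zero {w : R → R → M'} (hw : BiAdd w) (x : R) :
    w 0 x = 0 ∧ w x 0 = 0 := by
  constructor
  · have h := hw.1 0 0 x
    rw [add_zero] at h
    exact (left_eq_add.mp h)
  · have h := hw.2 x 0 0
    rw [add_zero] at h
    exact (left_eq_add.mp h)

lemma aux_dHoch1_neg (u : R → M') : dHoch1 p (-u) = - dHoch1 p u := by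
  funext x y
  simp only [dHoch1, Pi.neg_apply, smul_neg]
  abel

end Aux

/-- classification of strong Ann-functor structures by Hochschild
H². If a strong structure ν₀ exists (bi-additive, normalized, with
δ_Hoch ν₀ = p*α'), then ν ↦ ν₀ - ν induces a bijection between congruence
classes of strong Ann-functor structures (ν' ~ ν iff ν' = ν - δ_Hoch u for some
additive u) and H²_Hoch(R, M') (bi-additive 2-cocycles modulo coboundaries of
additive 1-cochains). -/
theorem strong_annFunctor_structures_classified_by_H2Hoch
    {R R' M' : Type*} [Ring R] [Ring R'] [AddCommGroup M'] [Module R' M']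
    [Module R'ᵐᵒᵖ M'] (p : R →+* R')
    (α' : R' → R' → R' → M')
    (hα'add : (∀ x x' y z, α' (x + x') y z = α' x y z + α' x' y z) ∧
      (∀ x y y' z, α' x (y + y') z = α' x y z + α' x y' z) ∧
      (∀ x y z z', α' x y (z + z') = α' x y z + α' x y z'))
    (hα'norm : ∀ x y z, α' 0 y z = 0 ∧ α' x 0 z = 0 ∧ α' x y 0 = 0)
    (hα'coc : ∀ x y z t : R', x • α' y z t - α' (x * y) z t + α' x (y * z) t
      - α' x y (z * t) + op t • α' x y z = 0)
    (ν₀ : R → R → M')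
    (hν₀ : BiAdd ν₀ ∧ (∀ x, ν₀ 0 x = 0 ∧ ν₀ x 0 = 0) ∧
      dHoch2 p ν₀ = fun x y z => α' (p x) (p y) (p z)) :
    ∃ Φ : Quot (fun (g g' : {ν : R → R → M' // BiAdd ν ∧
              (∀ x, ν 0 x = 0 ∧ ν x 0 = 0) ∧
              dHoch2 p ν = fun x y z => α' (p x) (p y) (p z)}) =>
            ∃ u : R → M', (∀ x y, u (x + y) = u x + u y) ∧
              g'.1 = g.1 - dHoch1 p u) →
          Quot (fun (w w' : {w : R → R → M' // BiAdd w ∧ dHoch2 p w = 0}) =>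
            ∃ u : R → M', (∀ x y, u (x + y) = u x + u y) ∧
              w'.1 = w.1 - dHoch1 p u),
      Function.Bijective Φ ∧
      ∀ (g : {ν : R → R → M' // BiAdd ν ∧ (∀ x, ν 0 x = 0 ∧ ν x 0 = 0) ∧
            dHoch2 p ν = fun x y z => α' (p x) (p y) (p z)})
        (w : {w : R → R → M' // BiAdd w ∧ dHoch2 p w = 0}),
        w.1 = ν₀ - g.1 → Φ (Quot.mk _ g) = Quot.mk _ w := by
  obtain ⟨hν₀add, hν₀norm, hν₀coc⟩ := hν₀
  -- element-level maps
  have hmemF : ∀ (g : {ν : R → R → M' // BiAdd ν ∧ (∀ x, ν 0 x = 0 ∧ ν x 0 = 0) ∧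
      dHoch2 p ν = fun x y z => α' (p x) (p y) (p z)}),
      BiAdd (ν₀ - g.1) ∧ dHoch2 p (ν₀ - g.1) = 0 := by
    rintro ⟨ν, hadd, hnorm, hcoc⟩
    refine ⟨aux_biadd_sub hν₀add hadd, ?_⟩
    rw [aux_dHoch2_sub, hν₀coc, hcoc, sub_self]
  have hmemG : ∀ (w : {w : R → R → M' // BiAdd w ∧ dHoch2 p w = 0}),
      BiAdd (ν₀ - w.1) ∧ (∀ x, (ν₀ - w.1) 0 x = 0 ∧ (ν₀ - w.1) x 0 = 0) ∧
      dHoch2 p (ν₀ - w.1) = fun x y z => α' (p x) (p y) (p z) := by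
    rintro ⟨w, hadd, hcoc⟩
    have hb := aux_biadd_sub hν₀add hadd
    refine ⟨hb, fun x => aux_zero hb x, ?_⟩
    rw [aux_dHoch2_sub, hν₀coc, hcoc, sub_zero]
  set F : {ν : R → R → M' // BiAdd ν ∧ (∀ x, ν 0 x = 0 ∧ ν x 0 = 0) ∧
      dHoch2 p ν = fun x y z => α' (p x) (p y) (p z)} →
      {w : R → R → M' // BiAdd w ∧ dHoch2 p w = 0} :=
    fun g => ⟨ν₀ - g.1, hmemF g⟩ with hF
  set G : {w : R → R → M' // BiAdd w ∧ dHoch2 p w = 0} →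
      {ν : R → R → M' // BiAdd ν ∧ (∀ x, ν 0 x = 0 ∧ ν x 0 = 0) ∧
      dHoch2 p ν = fun x y z => α' (p x) (p y) (p z)} :=
    fun w => ⟨ν₀ - w.1, hmemG w⟩ with hG
  -- well-definedness on quotients
  have wdF : ∀ g g', (∃ u : R → M', (∀ x y, u (x + y) = u x + u y) ∧
      g'.1 = g.1 - dHoch1 p u) →
      Quot.mk (fun (w w' : {w : R → R → M' // BiAdd w ∧ dHoch2 p w = 0}) =>
        ∃ u : R → M', (∀ x y, u (x + y) = u x + u y) ∧ w'.1 = w.1 - dHoch1 p u)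
        (F g) = Quot.mk _ (F g') := by
    rintro g g' ⟨u, huadd, hu⟩
    apply Quot.sound
    refine ⟨-u, fun x y => by simp [huadd x y]; abel, ?_⟩
    show ν₀ - g'.1 = ν₀ - g.1 - dHoch1 p (-u)
    rw [aux_dHoch1_neg, hu]
    abel
  have wdG : ∀ w w', (∃ u : R → M', (∀ x y, u (x + y) = u x + u y) ∧
      w'.1 = w.1 - dHoch1 p u) →
      Quot.mk (fun (g g' : {ν : R → R → M' // BiAdd ν ∧
          (∀ x, ν 0 x = 0 ∧ ν x 0 = 0) ∧
          dHoch2 p ν = fun x y z => α' (p x) (p y) (p z)}) =>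
        ∃ u : R → M', (∀ x y, u (x + y) = u x + u y) ∧ g'.1 = g.1 - dHoch1 p u)
        (G w) = Quot.mk _ (G w') := by
    rintro w w' ⟨u, huadd, hu⟩
    apply Quot.sound
    refine ⟨-u, fun x y => by simp [huadd x y]; abel, ?_⟩
    show ν₀ - w'.1 = ν₀ - w.1 - dHoch1 p (-u)
    rw [aux_dHoch1_neg, hu]
    abel
  refine ⟨Quot.lift (fun g => Quot.mk _ (F g)) wdF, ?_, ?_⟩
  · refine Function.bijective_iff_has_inverse.mpr
      ⟨Quot.lift (fun w => Quot.mk _ (G w)) wdG, ?_, ?_⟩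
    · apply Quot.ind
      intro g
      show Quot.mk _ (G (F g)) = Quot.mk _ g
      congr 1
      exact Subtype.ext (sub_sub_cancel ν₀ g.1)
    · apply Quot.ind
      intro w
      show Quot.mk _ (F (G w)) = Quot.mk _ w
      congr 1
      exact Subtype.ext (sub_sub_cancel ν₀ w.1)
  · intro g w hw
    show Quot.mk _ (F g) = Quot.mk _ w
    congr 1
    exact Subtype.ext hw.symm
end

section
/- Symmetric monoidal functor criterion via the exchange constraint: let (F, F̆) be a monoidal functor between symmetric monoidal (AC) categories that is compatible with the unit constraints. Then (F, F̆) is compatible with the associativity and commutativity constraints if and only if it is compatible with the exchange constraints v, v', where v_{X,Y,Z,T} : (X⊕Y)⊕(Z⊕T) → (X⊕Z)⊕(Y⊕T) is the canonical middle-four interchange isomorphism built from associators and the symmetry. -/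
open CategoryTheory MonoidalCategory

/-- The middle-four interchange isomorphism
`v : (W ⊗ X) ⊗ (Y ⊗ Z) ≅ (W ⊗ Y) ⊗ (X ⊗ Z)` built from associators and the
symmetry. -/
def exchangeIso {C : Type*} [Category C] [MonoidalCategory C]
    [SymmetricCategory C] (W X Y Z : C) :
    (W ⊗ X) ⊗ (Y ⊗ Z) ≅ (W ⊗ Y) ⊗ (X ⊗ Z) :=
  α_ W X (Y ⊗ Z) ≪≫
    whiskerLeftIso W ((α_ X Y Z).symm ≪≫ whiskerRightIso (β_ X Y) Z ≪≫
      α_ Y X Z) ≪≫ (α_ W Y (X ⊗ Z)).symm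

set_option linter.unusedSectionVars false

lemma exchangeIso_hom {C : Type*} [Category C] [MonoidalCategory C]
    [SymmetricCategory C] (W X Y Z : C) :
    (exchangeIso W X Y Z).hom = tensorμ W X Y Z := by
  simp [exchangeIso, tensorμ]

lemma tensorμ_unit_braid {C : Type*} [Category C] [MonoidalCategory C] [SymmetricCategory C]
    (Y Z : C) : tensorμ (𝟙_ C) Y Z (𝟙_ C) =
    ((λ_ Y).hom ⊗ₘ (ρ_ Z).hom) ≫ (β_ Y Z).hom ≫ ((λ_ Z).inv ⊗ₘ (ρ_ Y).inv) := by
  rw [tensorμ]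
  have e0 : (β_ Y Z).hom ▷ (𝟙_ C) =
      (ρ_ (Y ⊗ Z)).hom ≫ (β_ Y Z).hom ≫ (ρ_ (Z ⊗ Y)).inv := by
    rw [← rightUnitor_naturality]; simp
  have e1 : (𝟙_ C) ◁ ((β_ Y Z).hom ▷ (𝟙_ C)) =
      (λ_ ((Y ⊗ Z) ⊗ 𝟙_ C)).hom ≫ (ρ_ (Y ⊗ Z)).hom ≫ (β_ Y Z).hom ≫
        (ρ_ (Z ⊗ Y)).inv ≫ (λ_ ((Z ⊗ Y) ⊗ 𝟙_ C)).inv := by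
    rw [e0]
    simp only [MonoidalCategory.whiskerLeft_comp]
    rw [← cancel_mono (λ_ ((Z ⊗ Y) ⊗ 𝟙_ C)).hom]
    simp only [leftUnitor_naturality, leftUnitor_naturality_assoc, Category.assoc,
      Iso.inv_hom_id, Category.comp_id, Iso.inv_hom_id_assoc]
  rw [e1]
  have e2 : (α_ (𝟙_ C) Y (Z ⊗ 𝟙_ C)).hom ≫ (𝟙_ C) ◁ (α_ Y Z (𝟙_ C)).inv ≫
      (λ_ ((Y ⊗ Z) ⊗ 𝟙_ C)).hom ≫ (ρ_ (Y ⊗ Z)).hom = ((λ_ Y).hom ⊗ₘ (ρ_ Z).hom) := by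
    coherence
  have e3 : (ρ_ (Z ⊗ Y)).inv ≫ (λ_ ((Z ⊗ Y) ⊗ 𝟙_ C)).inv ≫ (𝟙_ C) ◁ (α_ Z Y (𝟙_ C)).hom ≫
      (α_ (𝟙_ C) Z (Y ⊗ 𝟙_ C)).inv = ((λ_ Z).inv ⊗ₘ (ρ_ Y).inv) := by
    coherence
  slice_lhs 1 4 => rw [e2]
  slice_lhs 3 6 => rw [e3]

lemma tensorμ_unit_mid {C : Type*} [Category C] [MonoidalCategory C] [SymmetricCategory C]
    (X Y Z : C) : tensorμ X (𝟙_ C) Y Z =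
    ((ρ_ X).hom ▷ (Y ⊗ Z)) ≫ (α_ X Y Z).inv ≫ ((X ⊗ Y) ◁ (λ_ Z).inv) := by
  rw [tensorμ, braiding_tensorUnit_left]
  coherence


section
variable {C D : Type*} [Category C] [Category D] [MonoidalCategory C]
    [MonoidalCategory D] [SymmetricCategory C] [SymmetricCategory D]
    (F : C ⥤ D) (e : 𝟙_ D ≅ F.obj (𝟙_ C)) (FF : ∀ X Y : C, F.obj X ⊗ F.obj Y ≅ F.obj (X ⊗ Y))
    (hnat : ∀ {X X' Y Y' : C} (f : X ⟶ X') (g : Y ⟶ Y'),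
      (F.map f ⊗ₘ F.map g) ≫ (FF X' Y').hom = (FF X Y).hom ≫ F.map (f ⊗ₘ g))
    (hlu : ∀ X : C, (e.hom ▷ F.obj X) ≫ (FF (𝟙_ C) X).hom ≫ F.map (λ_ X).hom
      = (λ_ (F.obj X)).hom)
    (hru : ∀ X : C, (F.obj X ◁ e.hom) ≫ (FF X (𝟙_ C)).hom ≫ F.map (ρ_ X).hom
      = (ρ_ (F.obj X)).hom)
    (ha : ∀ X Y Z : C,
        ((FF X Y).hom ▷ F.obj Z) ≫ (FF (X ⊗ Y) Z).hom ≫ F.map (α_ X Y Z).hom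
          = (α_ (F.obj X) (F.obj Y) (F.obj Z)).hom ≫
              (F.obj X ◁ (FF Y Z).hom) ≫ (FF X (Y ⊗ Z)).hom)
    (hb : ∀ X Y : C, (FF X Y).hom ≫ F.map (β_ X Y).hom
          = (β_ (F.obj X) (F.obj Y)).hom ≫ (FF Y X).hom)

include hnat in
lemma hnatL (X : C) {Y Y' : C} (g : Y ⟶ Y') :
    (F.obj X ◁ F.map g) ≫ (FF X Y').hom = (FF X Y).hom ≫ F.map (X ◁ g) := by
  have h := hnat (𝟙 X) g
  simpa using h

include hnat in
lemma hnatR {X X' : C} (f : X ⟶ X') (Y : C) :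
    (F.map f ▷ F.obj Y) ≫ (FF X' Y).hom = (FF X Y).hom ≫ F.map (f ▷ Y) := by
  have h := hnat f (𝟙 Y)
  simpa using h

include hlu in
lemma g1 (X : C) : (FF (𝟙_ C) X).hom ≫ F.map (λ_ X).hom
    = (e.inv ▷ F.obj X) ≫ (λ_ (F.obj X)).hom := by
  rw [← hlu X, ← Category.assoc, ← comp_whiskerRight]; simp

include hru in
lemma g2 (X : C) : (FF X (𝟙_ C)).hom ≫ F.map (ρ_ X).hom
    = (F.obj X ◁ e.inv) ≫ (ρ_ (F.obj X)).hom := by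
  rw [← hru X, ← Category.assoc, ← MonoidalCategory.whiskerLeft_comp]; simp

-- inverse form of associativity compatibility
lemma ha' (ha : ∀ X Y Z : C,
        ((FF X Y).hom ▷ F.obj Z) ≫ (FF (X ⊗ Y) Z).hom ≫ F.map (α_ X Y Z).hom
          = (α_ (F.obj X) (F.obj Y) (F.obj Z)).hom ≫
              (F.obj X ◁ (FF Y Z).hom) ≫ (FF X (Y ⊗ Z)).hom)
    (X Y Z : C) :
    (F.obj X ◁ (FF Y Z).hom) ≫ (FF X (Y ⊗ Z)).hom ≫ F.map (α_ X Y Z).inv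
      = (α_ (F.obj X) (F.obj Y) (F.obj Z)).inv ≫
          ((FF X Y).hom ▷ F.obj Z) ≫ (FF (X ⊗ Y) Z).hom := by
  rw [← cancel_mono (F.map (α_ X Y Z).hom), ← cancel_epi
    (α_ (F.obj X) (F.obj Y) (F.obj Z)).hom]
  simp [ha X Y Z]


include hnat ha hb in
lemma claimW (Y Z T : C) :
    (F.obj Y ◁ (FF Z T).hom) ≫ (FF Y (Z ⊗ T)).hom ≫
        F.map ((α_ Y Z T).inv ≫ ((β_ Y Z).hom ▷ T) ≫ (α_ Z Y T).hom)
      = (α_ (F.obj Y) (F.obj Z) (F.obj T)).inv ≫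
          ((β_ (F.obj Y) (F.obj Z)).hom ▷ F.obj T) ≫
          (α_ (F.obj Z) (F.obj Y) (F.obj T)).hom ≫
          (F.obj Z ◁ (FF Y T).hom) ≫ (FF Z (Y ⊗ T)).hom := by
  rw [F.map_comp, F.map_comp]
  slice_lhs 1 3 => rw [ha' F FF ha]
  slice_lhs 3 4 => rw [← hnatR F FF hnat]
  slice_lhs 2 3 => rw [← comp_whiskerRight, hb, comp_whiskerRight]
  slice_lhs 3 5 => rw [ha]

include hnat ha hb in
lemma fwd (X Y Z T : C) :
    ((FF X Y).hom ⊗ₘ (FF Z T).hom) ≫ (FF (X ⊗ Y) (Z ⊗ T)).hom ≫ F.map (tensorμ X Y Z T)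
      = tensorμ (F.obj X) (F.obj Y) (F.obj Z) (F.obj T) ≫
          ((FF X Z).hom ⊗ₘ (FF Y T).hom) ≫ (FF (X ⊗ Z) (Y ⊗ T)).hom := by
  have W := claimW F FF hnat ha hb Y Z T
  simp only [F.map_comp] at W
  have W2 := congrArg (fun t => F.obj X ◁ t) W
  simp only [MonoidalCategory.whiskerLeft_comp] at W2
  rw [tensorμ, tensorμ]
  simp only [F.map_comp]
  rw [tensorHom_def' (FF X Y).hom (FF Z T).hom]
  slice_lhs 2 4 => rw [ha]
  slice_lhs 1 2 => rw [associator_naturality_right]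
  slice_lhs 4 5 => rw [← hnatL F FF hnat]
  slice_lhs 5 6 => rw [← hnatL F FF hnat]
  slice_lhs 6 7 => rw [← hnatL F FF hnat]
  slice_lhs 2 6 => rw [W2]
  slice_lhs 6 8 => rw [ha' F FF ha]
  slice_lhs 5 6 => rw [associator_inv_naturality_right]
  slice_lhs 6 7 => rw [whisker_exchange]
  slice_lhs 6 7 => rw [← MonoidalCategory.tensorHom_def]
  simp

include hnat hlu hru in
lemma revBraid
    (h : ∀ X Y Z T : C,
        ((FF X Y).hom ⊗ₘ (FF Z T).hom) ≫ (FF (X ⊗ Y) (Z ⊗ T)).hom ≫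
            F.map (tensorμ X Y Z T)
          = tensorμ (F.obj X) (F.obj Y) (F.obj Z) (F.obj T) ≫
              ((FF X Z).hom ⊗ₘ (FF Y T).hom) ≫ (FF (X ⊗ Z) (Y ⊗ T)).hom)
    (Y Z : C) : (FF Y Z).hom ≫ F.map (β_ Y Z).hom
      = (β_ (F.obj Y) (F.obj Z)).hom ≫ (FF Z Y).hom := by
  have hx := h (𝟙_ C) Y Z (𝟙_ C)
  rw [tensorμ_unit_braid] at hx
  have hx2 := congrArg (fun t => t ≫ F.map ((λ_ Z).hom ⊗ₘ (ρ_ Y).hom)) hx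
  simp only [F.map_comp, Category.assoc] at hx2
  rw [← F.map_comp, tensorHom_comp_tensorHom, Iso.inv_hom_id, Iso.inv_hom_id, id_tensorHom_id,
    F.map_id, Category.comp_id] at hx2
  rw [← reassoc_of% (hnat (λ_ Y).hom (ρ_ Z).hom),
    ← hnat (λ_ Z).hom (ρ_ Y).hom] at hx2
  simp only [tensorHom_comp_tensorHom_assoc] at hx2
  rw [g1 F e FF hlu Y, g2 F e FF hru Z, g1 F e FF hlu Z, g2 F e FF hru Y] at hx2
  simp only [← tensorHom_comp_tensorHom, Category.assoc] at hx2
  simp only [← tensorHom_id, ← id_tensorHom] at hx2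
  rw [← reassoc_of% (tensorμ_natural e.inv (𝟙 (F.obj Y)) (𝟙 (F.obj Z)) e.inv)] at hx2
  rw [tensorμ_unit_braid] at hx2
  have hc : ((λ_ (F.obj Z)).inv ⊗ₘ (ρ_ (F.obj Y)).inv) ≫
      ((λ_ (F.obj Z)).hom ⊗ₘ (ρ_ (F.obj Y)).hom) = 𝟙 _ := by
    simp [tensorHom_comp_tensorHom]
  simp only [Category.assoc] at hx2
  rw [reassoc_of% hc] at hx2
  rwa [cancel_epi, cancel_epi] at hx2
include hnat hlu hru in
lemma revAssoc
    (h : ∀ X Y Z T : C,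
        ((FF X Y).hom ⊗ₘ (FF Z T).hom) ≫ (FF (X ⊗ Y) (Z ⊗ T)).hom ≫
            F.map (tensorμ X Y Z T)
          = tensorμ (F.obj X) (F.obj Y) (F.obj Z) (F.obj T) ≫
              ((FF X Z).hom ⊗ₘ (FF Y T).hom) ≫ (FF (X ⊗ Z) (Y ⊗ T)).hom)
    (X Y Z : C) :
    ((FF X Y).hom ▷ F.obj Z) ≫ (FF (X ⊗ Y) Z).hom ≫ F.map (α_ X Y Z).hom
      = (α_ (F.obj X) (F.obj Y) (F.obj Z)).hom ≫
          (F.obj X ◁ (FF Y Z).hom) ≫ (FF X (Y ⊗ Z)).hom := by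
  have hx := h X (𝟙_ C) Y Z
  rw [tensorμ_unit_mid] at hx
  have hx2 := congrArg (fun t => t ≫ F.map ((X ⊗ Y) ◁ (λ_ Z).hom)) hx
  simp only [F.map_comp, Category.assoc] at hx2
  rw [← F.map_comp, ← MonoidalCategory.whiskerLeft_comp, Iso.inv_hom_id,
    MonoidalCategory.whiskerLeft_id, F.map_id, Category.comp_id] at hx2
  rw [← reassoc_of% (hnatR F FF hnat (ρ_ X).hom (Y ⊗ Z))] at hx2
  simp only [← tensorHom_id, ← id_tensorHom, tensorHom_comp_tensorHom_assoc, Category.comp_id,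
    Category.id_comp] at hx2
  rw [g2 F e FF hru X] at hx2
  rw [← hnat (𝟙 (X ⊗ Y)) (λ_ Z).hom] at hx2
  simp only [CategoryTheory.Functor.map_id, tensorHom_comp_tensorHom_assoc, Category.comp_id,
    Category.id_comp] at hx2
  rw [g1 F e FF hlu Z] at hx2
  -- split the tensors of composites on both sides
  have hsplitL : (((F.obj X ◁ e.inv) ≫ (ρ_ (F.obj X)).hom) ⊗ₘ (FF Y Z).hom)
      = (((F.obj X ◁ e.inv) ≫ (ρ_ (F.obj X)).hom) ▷ (F.obj Y ⊗ F.obj Z)) ≫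
        (F.obj X ◁ (FF Y Z).hom) := by
    rw [MonoidalCategory.tensorHom_def]
  have hsplitR : ((FF X Y).hom ⊗ₘ ((e.inv ▷ F.obj Z) ≫ (λ_ (F.obj Z)).hom))
      = ((F.obj X ⊗ F.obj Y) ◁ (e.inv ▷ F.obj Z)) ≫
        ((FF X Y).hom ⊗ₘ (λ_ (F.obj Z)).hom) := by
    rw [← id_tensorHom, tensorHom_comp_tensorHom, Category.id_comp]
  rw [hsplitL, hsplitR] at hx2
  have hnatμ : tensorμ (F.obj X) (F.obj (𝟙_ C)) (F.obj Y) (F.obj Z) ≫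
      ((F.obj X ⊗ F.obj Y) ◁ (e.inv ▷ F.obj Z))
      = ((F.obj X ◁ e.inv) ▷ (F.obj Y ⊗ F.obj Z)) ≫
        tensorμ (F.obj X) (𝟙_ D) (F.obj Y) (F.obj Z) := by
    have h2 := tensorμ_natural (𝟙 (F.obj X)) e.inv (𝟙 (F.obj Y)) (𝟙 (F.obj Z))
    simp only [id_tensorHom_id, tensorHom_id, id_tensorHom, id_whiskerRight,
      MonoidalCategory.whiskerLeft_id] at h2
    exact h2.symm
  simp only [Category.assoc] at hx2
  rw [reassoc_of% hnatμ] at hx2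
  rw [tensorμ_unit_mid] at hx2
  have hco : ((F.obj X ⊗ F.obj Y) ◁ (λ_ (F.obj Z)).inv) ≫
      ((FF X Y).hom ⊗ₘ (λ_ (F.obj Z)).hom) = (FF X Y).hom ▷ F.obj Z := by
    rw [← id_tensorHom, tensorHom_comp_tensorHom]; simp
  simp only [Category.assoc] at hx2
  rw [reassoc_of% hco] at hx2
  rw [← comp_whiskerRight_assoc] at hx2
  rw [cancel_epi] at hx2
  rw [← cancel_mono (F.map (α_ X Y Z).inv)]
  simp only [Category.assoc, ← F.map_comp, Iso.hom_inv_id, F.map_id, Category.comp_id]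
  rw [hx2]
  simp
end

/-- a monoidal functor datum (F, F̆) between symmetric monoidal
categories which is compatible with the unit constraints is compatible with the
associativity and commutativity constraints if and only if it is compatible
with the exchange (middle-four interchange) constraints v, v'. -/
theorem ac_compatible_iff_exchange_compatible
    {C D : Type*} [Category C] [Category D] [MonoidalCategory C]
    [MonoidalCategory D] [SymmetricCategory C] [SymmetricCategory D]
    (F : C ⥤ D) (e : 𝟙_ D ≅ F.obj (𝟙_ C))
    (FF : ∀ X Y : C, F.obj X ⊗ F.obj Y ≅ F.obj (X ⊗ Y))
    (hnat : ∀ {X X' Y Y' : C} (f : X ⟶ X') (g : Y ⟶ Y'),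
      (F.map f ⊗ₘ F.map g) ≫ (FF X' Y').hom = (FF X Y).hom ≫ F.map (f ⊗ₘ g))
    (hlu : ∀ X : C, (e.hom ▷ F.obj X) ≫ (FF (𝟙_ C) X).hom ≫ F.map (λ_ X).hom
      = (λ_ (F.obj X)).hom)
    (hru : ∀ X : C, (F.obj X ◁ e.hom) ≫ (FF X (𝟙_ C)).hom ≫ F.map (ρ_ X).hom
      = (ρ_ (F.obj X)).hom) :
    ((∀ X Y Z : C,
        ((FF X Y).hom ▷ F.obj Z) ≫ (FF (X ⊗ Y) Z).hom ≫ F.map (α_ X Y Z).hom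
          = (α_ (F.obj X) (F.obj Y) (F.obj Z)).hom ≫
              (F.obj X ◁ (FF Y Z).hom) ≫ (FF X (Y ⊗ Z)).hom) ∧
     (∀ X Y : C, (FF X Y).hom ≫ F.map (β_ X Y).hom
          = (β_ (F.obj X) (F.obj Y)).hom ≫ (FF Y X).hom))
    ↔ (∀ X Y Z T : C,
        ((FF X Y).hom ⊗ₘ (FF Z T).hom) ≫ (FF (X ⊗ Y) (Z ⊗ T)).hom ≫
            F.map (exchangeIso X Y Z T).hom
          = (exchangeIso (F.obj X) (F.obj Y) (F.obj Z) (F.obj T)).hom ≫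
              ((FF X Z).hom ⊗ₘ (FF Y T).hom) ≫ (FF (X ⊗ Z) (Y ⊗ T)).hom) := by
  constructor
  · rintro ⟨ha, hb⟩ X Y Z T
    rw [exchangeIso_hom, exchangeIso_hom]
    exact fwd F FF (fun f g => hnat f g) ha hb X Y Z T
  · intro h
    have h' : ∀ X Y Z T : C,
        ((FF X Y).hom ⊗ₘ (FF Z T).hom) ≫ (FF (X ⊗ Y) (Z ⊗ T)).hom ≫
            F.map (tensorμ X Y Z T)
          = tensorμ (F.obj X) (F.obj Y) (F.obj Z) (F.obj T) ≫
              ((FF X Z).hom ⊗ₘ (FF Y T).hom) ≫ (FF (X ⊗ Z) (Y ⊗ T)).hom := by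
      intro X Y Z T
      rw [← exchangeIso_hom, ← exchangeIso_hom]
      exact h X Y Z T
    exact ⟨revAssoc F e FF (fun f g => hnat f g) hlu hru h',
      revBraid F e FF (fun f g => hnat f g) hlu hru h'⟩
end
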